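/- Let a > 0, T > 0, κ ≥ 0 and integers 1 ≤ m < n. Let u_m, u_{m+1}, …, u_n : [0,T] → [0,∞) be continuous functions such that for every integer ℓ with m ≤ ℓ ≤ n−1 and every t ∈ [0,T], u_ℓ(t) ≤ e^{−a(ℓ−1)t}·u_ℓ(0) + ∫₀^t e^{−a(ℓ−1)(t−s)}·( κ·ℓ + a·ℓ·u_{ℓ+1}(s) ) ds. Then u_m(T) ≤ ∑_{ℓ=m}^{n−1} [ u_ℓ(0)·G̃_m^ℓ(T) + (κ/a)·F̃_m^ℓ(T) ] + F̃_m^{n−1}(T)·sup_{t∈[0,T]} u_n(t). -/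

import Mathlib

/-- Auxiliary recursion for `F̃_m^ℓ`, indexed by the gap `k = ℓ - m`. -/
noncomputable def Ftgap (a : ℝ) : ℕ → ℕ → ℝ → ℝ
  | 0, m, t => a * (m : ℝ) *
      ∫ s in (0 : ℝ)..t, Real.exp (-a * ((m : ℝ) - 1) * (t - s))
  | k + 1, m, t => a * (m : ℝ) *
      ∫ s in (0 : ℝ)..t, Real.exp (-a * ((m : ℝ) - 1) * (t - s)) * Ftgap a k (m + 1) s

/-- `F̃_m^ℓ(t)` for `m ≤ ℓ`, the iterated integral
`(∏_{j=m}^{ℓ} aj) ∫…∫ exp(-a ∑_{j=m}^{ℓ} (j-1)(t_j - t_{j+1})) dt_{ℓ+1} ⋯ dt_{m+1}`. -/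
noncomputable def Fthier (a : ℝ) (m ℓ : ℕ) (t : ℝ) : ℝ := Ftgap a (ℓ - m) m t

/-- Auxiliary recursion for `G̃_m^ℓ`, indexed by the gap `k = ℓ - m`. -/
noncomputable def Gtgap (a : ℝ) : ℕ → ℕ → ℝ → ℝ
  | 0, m, t => Real.exp (-a * ((m : ℝ) - 1) * t)
  | k + 1, m, t => a * (m : ℝ) *
      ∫ s in (0 : ℝ)..t, Real.exp (-a * ((m : ℝ) - 1) * (t - s)) * Gtgap a k (m + 1) s

/-- `G̃_m^ℓ(t)` for `m ≤ ℓ`, with `G̃_m^m(t) = e^{-a(m-1)t}`. -/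
noncomputable def Gthier (a : ℝ) (m ℓ : ℕ) (t : ℝ) : ℝ := Gtgap a (ℓ - m) m t

/-!
Write `V_ℓ f (t) = aℓ ∫₀ᵗ e^{-a(ℓ-1)(t-s)} f(s) ds` (`expVolterra`). Then `F̃_ℓ^ℓ = V_ℓ 1`,
`F̃_ℓ^j = V_ℓ F̃_{ℓ+1}^j` and `G̃_ℓ^j = V_ℓ G̃_{ℓ+1}^j` for `ℓ < j`, and the hypothesis at level `ℓ`
reads `u_ℓ ≤ u_ℓ(0) G̃_ℓ^ℓ + (κ/a) F̃_ℓ^ℓ + V_ℓ u_{ℓ+1}`. Since `V_ℓ` is linear, the right-hand side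
of the theorem with `m` replaced by `ℓ` (`hierarchyBound`) satisfies this relation with equality,
where at the top level `u_n` is replaced by the constant `sup u_n`. Since `V_ℓ` is also monotone,
downward induction on `ℓ` from `n - 1` bounds every `u_ℓ` by it.
-/

open Set intervalIntegral MeasureTheory

noncomputable def expVolterra (a : ℝ) (m : ℕ) (f : ℝ → ℝ) (t : ℝ) : ℝ :=
  a * (m : ℝ) * ∫ s in (0 : ℝ)..t, Real.exp (-a * ((m : ℝ) - 1) * (t - s)) * f s

section expVolterra

variable {a : ℝ} {m : ℕ} {f g : ℝ → ℝ} {t : ℝ}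

theorem continuous_expVolterra (hf : Continuous f) : Continuous (expVolterra a m f) :=
  continuous_const.mul <| continuous_parametric_intervalIntegral_of_continuous
    (by fun_prop) continuous_id

theorem intervalIntegrable_exp_mul_sub (c : ℝ) (hf : IntervalIntegrable f volume 0 t) :
    IntervalIntegrable (fun s => Real.exp (c * (t - s)) * f s) volume 0 t :=
  hf.continuousOn_mul (by fun_prop)

theorem expVolterra_le_expVolterra (ha : 0 ≤ a) (ht : 0 ≤ t)
    (hf : IntervalIntegrable f volume 0 t) (hg : IntervalIntegrable g volume 0 t)
    (hfg : ∀ s ∈ Icc 0 t, f s ≤ g s) : expVolterra a m f t ≤ expVolterra a m g t := by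
  unfold expVolterra
  gcongr
  exact integral_mono_on ht (intervalIntegrable_exp_mul_sub _ hf)
    (intervalIntegrable_exp_mul_sub _ hg)
    fun s hs => mul_le_mul_of_nonneg_left (hfg s hs) (Real.exp_nonneg _)

theorem expVolterra_add (hf : IntervalIntegrable f volume 0 t)
    (hg : IntervalIntegrable g volume 0 t) :
    expVolterra a m (fun s => f s + g s) t = expVolterra a m f t + expVolterra a m g t := by
  simp only [expVolterra, mul_add]
  rw [integral_add (intervalIntegrable_exp_mul_sub _ hf) (intervalIntegrable_exp_mul_sub _ hg),
    mul_add]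

theorem expVolterra_const_mul (c : ℝ) :
    expVolterra a m (fun s => c * f s) t = c * expVolterra a m f t := by
  simp only [expVolterra, mul_left_comm _ c, intervalIntegral.integral_const_mul]

theorem expVolterra_mul_const (c : ℝ) :
    expVolterra a m (fun s => f s * c) t = expVolterra a m f t * c := by
  simp only [mul_comm _ c, expVolterra_const_mul]

theorem expVolterra_sum {ι : Type*} (S : Finset ι) {F : ι → ℝ → ℝ}
    (hF : ∀ i ∈ S, IntervalIntegrable (F i) volume 0 t) :
    expVolterra a m (fun s => ∑ i ∈ S, F i s) t = ∑ i ∈ S, expVolterra a m (F i) t := by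
  simp only [expVolterra, Finset.mul_sum]
  rw [integral_finsetSum fun i hi => intervalIntegrable_exp_mul_sub _ (hF i hi), Finset.mul_sum]

end expVolterra

section kernels

variable {a : ℝ}

theorem continuous_Ftgap : ∀ k m, Continuous (Ftgap a k m)
  | 0, _ => continuous_const.mul <| continuous_parametric_intervalIntegral_of_continuous
      (by fun_prop) continuous_id
  | k + 1, m => continuous_expVolterra (continuous_Ftgap k (m + 1))

theorem continuous_Gtgap : ∀ k m, Continuous (Gtgap a k m)
  | 0, m => show Continuous fun t => Real.exp (-a * ((m : ℝ) - 1) * t) by fun_prop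
  | k + 1, m => continuous_expVolterra (continuous_Gtgap k (m + 1))

theorem Fthier_self (m : ℕ) (t : ℝ) : Fthier a m m t = expVolterra a m (fun _ => 1) t := by
  simp [Fthier, Ftgap, expVolterra]

theorem Gthier_self (m : ℕ) (t : ℝ) : Gthier a m m t = Real.exp (-a * ((m : ℝ) - 1) * t) := by
  simp [Gthier, Gtgap]

theorem Fthier_of_lt {m ℓ : ℕ} (h : m < ℓ) (t : ℝ) :
    Fthier a m ℓ t = expVolterra a m (Fthier a (m + 1) ℓ) t := by
  rw [Fthier, show ℓ - m = ℓ - (m + 1) + 1 by omega]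
  rfl

theorem Gthier_of_lt {m ℓ : ℕ} (h : m < ℓ) (t : ℝ) :
    Gthier a m ℓ t = expVolterra a m (Gthier a (m + 1) ℓ) t := by
  rw [Gthier, show ℓ - m = ℓ - (m + 1) + 1 by omega]
  rfl

@[fun_prop]
theorem continuous_Fthier (m ℓ : ℕ) : Continuous (Fthier a m ℓ) := continuous_Ftgap _ _

@[fun_prop]
theorem continuous_Gthier (m ℓ : ℕ) : Continuous (Gthier a m ℓ) := continuous_Gtgap _ _

end kernels

noncomputable def hierarchyBound (a κ M : ℝ) (u : ℕ → ℝ → ℝ) (n ℓ : ℕ) (t : ℝ) : ℝ :=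
  (∑ j ∈ Finset.Icc ℓ (n - 1), (u j 0 * Gthier a ℓ j t + κ / a * Fthier a ℓ j t))
    + Fthier a ℓ (n - 1) t * M

section hierarchyBound

variable {a κ M : ℝ} {u : ℕ → ℝ → ℝ} {n ℓ : ℕ} {t : ℝ}

theorem continuous_hierarchyBound : Continuous (hierarchyBound a κ M u n ℓ) := by
  unfold hierarchyBound
  fun_prop

theorem hierarchyBound_of_succ_eq (h : ℓ + 1 = n) :
    hierarchyBound a κ M u n ℓ t = u ℓ 0 * Gthier a ℓ ℓ t + κ / a * Fthier a ℓ ℓ t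
      + expVolterra a ℓ (fun _ => M) t := by
  obtain rfl := h
  rw [hierarchyBound, Nat.add_sub_cancel, Finset.Icc_self, Finset.sum_singleton, Fthier_self,
    ← expVolterra_mul_const]
  simp only [one_mul]

theorem hierarchyBound_of_succ_lt (h : ℓ + 1 < n) :
    hierarchyBound a κ M u n ℓ t = u ℓ 0 * Gthier a ℓ ℓ t + κ / a * Fthier a ℓ ℓ t
      + expVolterra a ℓ (hierarchyBound a κ M u n (ℓ + 1)) t := by
  have hint : ∀ f : ℝ → ℝ, Continuous f → IntervalIntegrable f volume 0 t :=
    fun f hf => hf.intervalIntegrable 0 t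
  have hV : expVolterra a ℓ (hierarchyBound a κ M u n (ℓ + 1)) t
      = (∑ j ∈ Finset.Icc (ℓ + 1) (n - 1), (u j 0 * Gthier a ℓ j t + κ / a * Fthier a ℓ j t))
        + Fthier a ℓ (n - 1) t * M := by
    unfold hierarchyBound
    rw [expVolterra_add (hint _ (by fun_prop)) (hint _ (by fun_prop)),
      expVolterra_sum _ fun j _ => hint _ (by fun_prop), expVolterra_mul_const,
      ← Fthier_of_lt (by omega)]
    congr 1
    refine Finset.sum_congr rfl fun j hj => ?_
    have hℓj : ℓ < j := by simp only [Finset.mem_Icc] at hj; omega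
    rw [expVolterra_add (hint _ (by fun_prop)) (hint _ (by fun_prop)), expVolterra_const_mul,
      expVolterra_const_mul, ← Gthier_of_lt hℓj, ← Fthier_of_lt hℓj]
  rw [hV, hierarchyBound, ← Finset.insert_Icc_add_one_left_eq_Icc (by omega : ℓ ≤ n - 1),
    Finset.sum_insert (by simp), add_assoc]

end hierarchyBound

theorem integral_exp_mul_add_eq {a : ℝ} (ha : a ≠ 0) (κ : ℝ) (ℓ : ℕ) {f : ℝ → ℝ} {t : ℝ}
    (hf : IntervalIntegrable f volume 0 t) :
    ∫ s in (0 : ℝ)..t, Real.exp (-a * ((ℓ : ℝ) - 1) * (t - s)) * (κ * ℓ + a * ℓ * f s)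
      = κ / a * Fthier a ℓ ℓ t + expVolterra a ℓ f t := by
  calc _ = a * ℓ * ∫ s in (0 : ℝ)..t,
        Real.exp (-a * ((ℓ : ℝ) - 1) * (t - s)) * (κ / a + f s) := by
        rw [← intervalIntegral.integral_const_mul]
        refine integral_congr fun s _ => ?_
        field_simp
    _ = κ / a * Fthier a ℓ ℓ t + expVolterra a ℓ f t := by
        rw [← expVolterra, expVolterra_add intervalIntegrable_const hf, Fthier_self,
          ← expVolterra_const_mul, mul_one]

section comparison

variable {a κ M T : ℝ} {u : ℕ → ℝ → ℝ} {m n : ℕ}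

theorem le_hierarchyBound (ha : 0 < a)
    (hcont : ∀ ℓ, m < ℓ → ℓ ≤ n → ContinuousOn (u ℓ) (Icc 0 T))
    (hM : ∀ t ∈ Icc 0 T, u n t ≤ M)
    (hrec : ∀ ℓ, m ≤ ℓ → ℓ < n → ∀ t ∈ Icc (0 : ℝ) T,
      u ℓ t ≤ Real.exp (-a * ((ℓ : ℝ) - 1) * t) * u ℓ 0
        + ∫ s in (0 : ℝ)..t,
            Real.exp (-a * ((ℓ : ℝ) - 1) * (t - s)) * (κ * ℓ + a * ℓ * u (ℓ + 1) s))
    {ℓ : ℕ} (hmℓ : m ≤ ℓ) (hℓn : ℓ < n) :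
    ∀ t ∈ Icc 0 T, u ℓ t ≤ hierarchyBound a κ M u n ℓ t := by
  have hint : ∀ k, m < k → k ≤ n → ∀ t ∈ Icc 0 T, IntervalIntegrable (u k) volume 0 t :=
    fun k hmk hkn t ht =>
      ((hcont k hmk hkn).mono (Icc_subset_Icc_right ht.2)).intervalIntegrable_of_Icc ht.1
  have hstep : ∀ k, m ≤ k → k < n → ∀ g : ℝ → ℝ, Continuous g →
      (∀ t ∈ Icc 0 T, u (k + 1) t ≤ g t) → ∀ t ∈ Icc 0 T,
        u k t ≤ u k 0 * Gthier a k k t + κ / a * Fthier a k k t + expVolterra a k g t := by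
    intro k hmk hkn g hg hug t ht
    have hu := hint (k + 1) (by omega) hkn t ht
    calc u k t
        ≤ u k 0 * Gthier a k k t + κ / a * Fthier a k k t + expVolterra a k (u (k + 1)) t := by
          rw [Gthier_self, mul_comm, add_assoc, ← integral_exp_mul_add_eq ha.ne' κ k hu]
          exact hrec k hmk hkn t ht
      _ ≤ _ := by
          gcongr
          exact expVolterra_le_expVolterra ha.le ht.1 hu (hg.intervalIntegrable 0 t)
            fun s hs => hug s ⟨hs.1, hs.2.trans ht.2⟩
  refine Nat.decreasingInduction'
    (P := fun k => ∀ t ∈ Icc 0 T, u k t ≤ hierarchyBound a κ M u n k t)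
    (fun k hk hℓk ih t ht => ?_) (by omega : ℓ ≤ n - 1) fun t ht => ?_
  · rw [hierarchyBound_of_succ_lt (by omega)]
    exact hstep k (by omega) (by omega) _ continuous_hierarchyBound ih t ht
  · have hn : n - 1 + 1 = n := by omega
    rw [hierarchyBound_of_succ_eq hn]
    exact hstep _ (by omega) (by omega) _ continuous_const (hn ▸ hM) t ht

end comparison

theorem hierarchy_iteration_general (a T κ : ℝ) (ha : 0 < a) (hT : 0 < T)
    (m n : ℕ) (hmn : m < n)
    (u : ℕ → ℝ → ℝ)
    (hcont : ∀ ℓ, m ≤ ℓ → ℓ ≤ n → ContinuousOn (u ℓ) (Set.Icc 0 T))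
    (hrec : ∀ ℓ, m ≤ ℓ → ℓ ≤ n - 1 → ∀ t ∈ Set.Icc (0 : ℝ) T,
      u ℓ t ≤ Real.exp (-a * ((ℓ : ℝ) - 1) * t) * u ℓ 0
        + ∫ s in (0 : ℝ)..t,
            Real.exp (-a * ((ℓ : ℝ) - 1) * (t - s))
              * (κ * (ℓ : ℝ) + a * (ℓ : ℝ) * u (ℓ + 1) s)) :
    u m T ≤ (∑ ℓ ∈ Finset.Icc m (n - 1),
        (u ℓ 0 * Gthier a m ℓ T + (κ / a) * Fthier a m ℓ T))
      + Fthier a m (n - 1) T * sSup (u n '' Set.Icc 0 T) := by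
  have hM : ∀ t ∈ Icc 0 T, u n t ≤ sSup (u n '' Icc 0 T) := fun t ht =>
    le_csSup (isCompact_Icc.image_of_continuousOn (hcont n hmn.le le_rfl)).bddAbove
      (mem_image_of_mem _ ht)
  exact le_hierarchyBound ha (fun ℓ hmℓ hℓn => hcont ℓ hmℓ.le hℓn) hM
    (fun ℓ hmℓ hℓn => hrec ℓ hmℓ (by omega)) le_rfl hmn T ⟨hT.le, le_rfl⟩

/-- Iteration lemma for the hierarchy of Grönwall-type integral inequalities:
bound on the `m`-th level in terms of the iterated kernels `F̃` and `G̃`. -/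
theorem hierarchy_iteration (a T κ : ℝ) (ha : 0 < a) (hT : 0 < T) (hκ : 0 ≤ κ)
    (m n : ℕ) (hm : 1 ≤ m) (hmn : m < n)
    (u : ℕ → ℝ → ℝ)
    (hcont : ∀ ℓ, m ≤ ℓ → ℓ ≤ n → ContinuousOn (u ℓ) (Set.Icc 0 T))
    (hnonneg : ∀ ℓ, m ≤ ℓ → ℓ ≤ n → ∀ t ∈ Set.Icc (0 : ℝ) T, 0 ≤ u ℓ t)
    (hrec : ∀ ℓ, m ≤ ℓ → ℓ ≤ n - 1 → ∀ t ∈ Set.Icc (0 : ℝ) T,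
      u ℓ t ≤ Real.exp (-a * ((ℓ : ℝ) - 1) * t) * u ℓ 0
        + ∫ s in (0 : ℝ)..t,
            Real.exp (-a * ((ℓ : ℝ) - 1) * (t - s))
              * (κ * (ℓ : ℝ) + a * (ℓ : ℝ) * u (ℓ + 1) s)) :
    u m T ≤ (∑ ℓ ∈ Finset.Icc m (n - 1),
        (u ℓ 0 * Gthier a m ℓ T + (κ / a) * Fthier a m ℓ T))
      + Fthier a m (n - 1) T * sSup (u n '' Set.Icc 0 T) :=
  hierarchy_iteration_general a T κ ha hT m n hmn u hcont hrec
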